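/- Let a, b ∈ ℝ_{++}ⁿ be strictly positive probability vectors, C ∈ ℝ₊^{n×n}, γ > 0, K := exp(−C/γ), and let (f*, g*) be any dual optimal solution (i.e. diag(e^{f*/γ}) K diag(e^{g*/γ}) has row sums a and column sums b). Then h(f*, g*) − h(γ log a, γ log b) ≤ 4‖C‖_∞. -/

import Mathlib

/-!
With `S_f = Σ_i e^{f*_i/γ}` and `S_g = Σ_j e^{g*_j/γ}`, the row constraint
`a_i = e^{f*_i/γ} Σ_j K_ij e^{g*_j/γ}` and `K_ij ≥ e^{-‖C‖_∞/γ}` give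
`f*_i ≤ γ log a_i + ‖C‖_∞ − γ log S_g`, and symmetrically for `g*`. Averaging against `a`
and `b` bounds the linear part of the gap by `2‖C‖_∞ − γ log (S_f S_g)`, and
`S_f S_g ≥ Σ P_ij = 1` since `K ≤ 1`. The entropic terms contribute
`γ (Σ a_i b_j K_ij − 1) ≤ 0`, so the gap is even at most `2‖C‖_∞`.
-/

/-- The dual entropic OT objective
`h(f,g) = ⟨f,a⟩ + ⟨g,b⟩ − γ Σ_{i,j} exp((f_i + g_j − C_{ij})/γ)`. -/
noncomputable def dualObj {n : ℕ} (a b : Fin n → ℝ) (C : Matrix (Fin n) (Fin n) ℝ)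
    (γ : ℝ) (f g : Fin n → ℝ) : ℝ :=
  (∑ i, f i * a i) + (∑ j, g j * b j) -
    γ * ∑ i, ∑ j, Real.exp ((f i + g j - C i j) / γ)

/-- The transport plan `P = diag(e^{f/γ}) K diag(e^{g/γ})` with `K = exp(−C/γ)`. -/
noncomputable def plan {n : ℕ} (C : Matrix (Fin n) (Fin n) ℝ) (γ : ℝ)
    (f g : Fin n → ℝ) : Matrix (Fin n) (Fin n) ℝ :=
  fun i j => Real.exp (f i / γ) * Real.exp (-C i j / γ) * Real.exp (g j / γ)

open Finset Real
open scoped Matrix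

lemma le_iSup_iSup_abs {ι κ : Type*} [Finite ι] [Finite κ] (C : ι → κ → ℝ) (i : ι)
    (j : κ) :
    C i j ≤ ⨆ i, ⨆ j, |C i j| :=
  (le_abs_self _).trans <| (le_ciSup (Finite.bddAbove_range _) j).trans <|
    le_ciSup (f := fun i => ⨆ j, |C i j|) (Finite.bddAbove_range _) i

lemma sum_mul_le_sum_mul_add {ι : Type*} [Fintype ι] {x y w : ι → ℝ} {c : ℝ}
    (hxy : ∀ i, x i ≤ y i + c) (hw : ∀ i, 0 ≤ w i) (hw1 : ∑ i, w i = 1) :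
    ∑ i, x i * w i ≤ ∑ i, y i * w i + c :=
  calc ∑ i, x i * w i ≤ ∑ i, (y i + c) * w i :=
        sum_le_sum fun i _ => mul_le_mul_of_nonneg_right (hxy i) (hw i)
    _ = ∑ i, y i * w i + c := by simp only [add_mul, sum_add_distrib, ← mul_sum, hw1, mul_one]

section Plan

variable {n : ℕ} {C : Matrix (Fin n) (Fin n) ℝ} {γ : ℝ}

lemma plan_apply (hγ : γ ≠ 0) (f g : Fin n → ℝ) (i j : Fin n) :
    plan C γ f g i j = exp ((f i + g j - C i j) / γ) := by
  rw [plan, ← exp_add, ← exp_add]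
  congr 1
  field_simp
  ring

lemma plan_transpose (f g : Fin n → ℝ) : plan Cᵀ γ g f = (plan C γ f g)ᵀ := by
  ext i j
  simp only [plan, Matrix.transpose_apply]
  ring

lemma dualObj_eq_sub_mass (hγ : γ ≠ 0) (a b f g : Fin n → ℝ) :
    dualObj a b C γ f g =
      (∑ i, f i * a i) + (∑ j, g j * b j) - γ * ∑ i, ∑ j, plan C γ f g i j := by
  simp only [dualObj, plan_apply hγ]

lemma plan_le (hγ : 0 < γ) (hC : ∀ i j, 0 ≤ C i j) (f g : Fin n → ℝ) (i j : Fin n) :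
    plan C γ f g i j ≤ exp (f i / γ) * exp (g j / γ) := by
  have hK : exp (-C i j / γ) ≤ 1 :=
    exp_le_one_iff.mpr (div_nonpos_of_nonpos_of_nonneg (neg_nonpos.mpr (hC i j)) hγ.le)
  calc plan C γ f g i j = exp (f i / γ) * exp (g j / γ) * exp (-C i j / γ) := by
        rw [plan]; ring
    _ ≤ exp (f i / γ) * exp (g j / γ) := mul_le_of_le_one_right (by positivity) hK

lemma sum_plan_le (hγ : 0 < γ) (hC : ∀ i j, 0 ≤ C i j) (f g : Fin n → ℝ) :
    ∑ i, ∑ j, plan C γ f g i j ≤ (∑ i, exp (f i / γ)) * ∑ j, exp (g j / γ) := by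
  rw [sum_mul_sum]
  exact sum_le_sum fun i _ => sum_le_sum fun j _ => plan_le hγ hC f g i j

lemma sum_plan_log_le_one (hγ : 0 < γ) (hC : ∀ i j, 0 ≤ C i j) {a b : Fin n → ℝ}
    (ha0 : ∀ i, 0 < a i) (hb0 : ∀ j, 0 < b j) (ha1 : ∑ i, a i = 1) (hb1 : ∑ j, b j = 1) :
    ∑ i, ∑ j, plan C γ (fun i => γ * log (a i)) (fun j => γ * log (b j)) i j ≤ 1 := by
  have hexp : ∀ {x : ℝ}, 0 < x → exp (γ * log x / γ) = x := fun hx => by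
    rw [mul_div_cancel_left₀ _ hγ.ne', exp_log hx]
  calc _ ≤ (∑ i, exp (γ * log (a i) / γ)) * ∑ j, exp (γ * log (b j) / γ) :=
        sum_plan_le hγ hC _ _
    _ = 1 := by simp only [hexp (ha0 _), hexp (hb0 _), ha1, hb1, mul_one]

lemma potential_le_of_row_sum (hγ : 0 < γ) {N : ℝ} {f g : Fin n → ℝ} {a : ℝ} {i : Fin n}
    (hCN : ∀ j, C i j ≤ N) (hrow : ∑ j, plan C γ f g i j = a) :
    f i ≤ γ * log a + (N - γ * log (∑ j, exp (g j / γ))) := by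
  have : Nonempty (Fin n) := ⟨i⟩
  have hSg : 0 < ∑ j, exp (g j / γ) := sum_pos (fun _ _ => exp_pos _) univ_nonempty
  have hlow : exp ((f i - N) / γ) * ∑ j, exp (g j / γ) ≤ a := by
    rw [← hrow, mul_sum]
    refine sum_le_sum fun j _ => ?_
    rw [← exp_add, plan_apply hγ.ne', exp_le_exp, ← add_div]
    exact div_le_div_of_nonneg_right (by linarith [hCN j]) hγ.le
  have hlog := log_le_log (by positivity) hlow
  rw [log_mul (exp_pos _).ne' hSg.ne', log_exp] at hlog
  have := (div_le_iff₀ hγ).1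
    (show (f i - N) / γ ≤ log a - log (∑ j, exp (g j / γ)) by linarith)
  linarith

end Plan

/-- **Initial dual gap bound** (Lemma of the paper): for any dual optimal solution
`(f*, g*)`, `h(f*,g*) − h(γ log a, γ log b) ≤ 4‖C‖_∞`. -/
theorem greenkhorn_initial_gap_bound {n : ℕ} (a b : Fin n → ℝ)
    (C : Matrix (Fin n) (Fin n) ℝ) (γ : ℝ) (hγ : 0 < γ)
    (ha0 : ∀ i, 0 < a i) (hb0 : ∀ j, 0 < b j)
    (ha1 : ∑ i, a i = 1) (hb1 : ∑ j, b j = 1)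
    (hC : ∀ i j, 0 ≤ C i j)
    (fs gs : Fin n → ℝ)
    (hfs : ∀ i, ∑ j, plan C γ fs gs i j = a i)
    (hgs : ∀ j, ∑ i, plan C γ fs gs i j = b j) :
    dualObj a b C γ fs gs -
        dualObj a b C γ (fun i => γ * Real.log (a i)) (fun j => γ * Real.log (b j)) ≤
      4 * ⨆ i, ⨆ j, |C i j| := by
  set N := ⨆ i, ⨆ j, |C i j|
  set Sf := ∑ i, exp (fs i / γ)
  set Sg := ∑ j, exp (gs j / γ)
  have hN : 0 ≤ N := Real.iSup_nonneg fun i => Real.iSup_nonneg fun j => abs_nonneg _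
  have hmass : ∑ i, ∑ j, plan C γ fs gs i j = 1 := by simp only [hfs, ha1]
  have hSfSg : 1 ≤ Sf * Sg := hmass ▸ sum_plan_le hγ hC fs gs
  have hlogS : 0 ≤ γ * log Sf + γ * log Sg := by
    have hS : Sf * Sg ≠ 0 := (one_pos.trans_le hSfSg).ne'
    rw [← mul_add, ← log_mul (left_ne_zero_of_mul hS) (right_ne_zero_of_mul hS)]
    exact mul_nonneg hγ.le (log_nonneg hSfSg)
  have hf : ∑ i, fs i * a i ≤ ∑ i, γ * log (a i) * a i + (N - γ * log Sg) :=
    sum_mul_le_sum_mul_add (fun i => potential_le_of_row_sum hγ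
      (fun j => le_iSup_iSup_abs C i j) (hfs i)) (fun i => (ha0 i).le) ha1
  have hg : ∑ j, gs j * b j ≤ ∑ j, γ * log (b j) * b j + (N - γ * log Sf) :=
    sum_mul_le_sum_mul_add (fun j => potential_le_of_row_sum (C := Cᵀ) hγ
      (fun i => le_iSup_iSup_abs C i j) (by rw [plan_transpose]; exact hgs j))
      (fun j => (hb0 j).le) hb1
  have hmass0 := mul_le_mul_of_nonneg_left (sum_plan_log_le_one hγ hC ha0 hb0 ha1 hb1) hγ.le
  rw [dualObj_eq_sub_mass hγ.ne', dualObj_eq_sub_mass hγ.ne', hmass]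
  linarith
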